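/- There is an absolute constant C > 0 such that for every integer Q ≥ 2 and all coprime integers q, a with 2Q/3 < q ≤ Q and 1 ≤ a ≤ q−1, if the multiplicative inverse ā of a mod q satisfies Q−q+1 ≤ ā ≤ 2q−Q−1, then |ω_{q,a} − (Q−q)/(Q·ā·(q−ā)·(1+a²/q²))| ≤ C·(1/(Q²·ā) + 1/(Q²·(q−ā))). -/

import Mathlib

/-!
For `ω ∈ [0, π/4)` write `t = tan ω`. The ray in direction `ω` meets the scatterer
`{k} × [m - h, m + h]` iff `|k t - m| ≤ h`, so it first hits `(q, a)` iff `|q t - a| ≤ h` and no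
column `k < q` is hit. Since `q (k t - m) = k (q t - a) + (k a - m q)` and
`k ≡ (k a - m q) ā (mod q)`, a column `0 < k < q` can only be hit when `k a - m q = ±1`, that is
for `k = ā` and `k = q - ā`. These two columns cut `t` down to an open interval around `a / q` of
length `(Q - q) / (Q ā (q - ā))` and radius at most `1 / (q Q)`. Hence `ω_{q,a}` is the increment
of `arctan` over that interval, and since `1 / (1 + t²)` is `1`-Lipschitz the mean value theorem
compares it with the length divided by `1 + (a / q)²`.
-/

open Real MeasureTheory Set

/-- Free path length in the model with vertical scatterers of half-height `h`. -/
noncomputable def lv (h ω : ℝ) : ℝ :=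
  sInf {τ : ℝ | 0 < τ ∧ ∃ p : ℤ × ℤ, p ≠ (0, 0) ∧
    τ * Real.cos ω = (p.1 : ℝ) ∧ |τ * Real.sin ω - (p.2 : ℝ)| ≤ h}

/-- The measure of the set of directions in `[0, π/4)` whose trajectory first
hits the vertical scatterer centered at `(q, a)`. -/
noncomputable def omegaQA (Q : ℕ) (q a : ℤ) : ℝ :=
  (volume {ω ∈ Set.Ico (0 : ℝ) (Real.pi / 4) |
      lv (1 / (Q : ℝ)) ω * Real.cos ω = (q : ℝ) ∧
      |lv (1 / (Q : ℝ)) ω * Real.sin ω - (a : ℝ)| ≤ 1 / (Q : ℝ)}).toReal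

def hitColumns (h t : ℝ) : Set ℤ := {k | 1 ≤ k ∧ ∃ m : ℤ, |k * t - m| ≤ h}

lemma mul_sin_eq_mul_cos_mul_tan {ω : ℝ} (hc : 0 < cos ω) (τ : ℝ) :
    τ * sin ω = τ * cos ω * tan ω := by
  rw [tan_eq_sin_div_cos]; field_simp

lemma setOf_lv_eq_image {h ω : ℝ} (hc : 0 < cos ω) :
    {τ : ℝ | 0 < τ ∧ ∃ p : ℤ × ℤ, p ≠ (0, 0) ∧
      τ * cos ω = (p.1 : ℝ) ∧ |τ * sin ω - (p.2 : ℝ)| ≤ h} =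
    (fun k : ℤ => (k : ℝ) / cos ω) '' hitColumns h (tan ω) := by
  ext τ
  simp only [mem_ofPred_eq, mem_image, hitColumns, mul_sin_eq_mul_cos_mul_tan hc]
  constructor
  · rintro ⟨hτ, ⟨k, m⟩, -, hk, hm⟩
    have hk0 : (0 : ℝ) < k := hk ▸ mul_pos hτ hc
    exact ⟨k, ⟨by exact_mod_cast hk0, m, hk ▸ hm⟩, by rw [← hk]; field_simp⟩
  · rintro ⟨k, ⟨hk, m, hm⟩, rfl⟩
    have hk0 : (0 : ℝ) < k := by exact_mod_cast hk
    refine ⟨div_pos hk0 hc, (k, m), by simp; omega, div_mul_cancel₀ _ hc.ne', ?_⟩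
    rwa [div_mul_cancel₀ _ hc.ne']

lemma lv_mul_cos_eq_iff_isLeast {h ω : ℝ} (hc : 0 < cos ω) {n : ℤ} (hn : 1 ≤ n) :
    lv h ω * cos ω = n ↔ IsLeast (hitColumns h (tan ω)) n := by
  rw [lv, setOf_lv_eq_image hc]
  rcases (hitColumns h (tan ω)).eq_empty_or_nonempty with hK | hK
  · have hn0 : (n : ℝ) ≠ 0 := by exact_mod_cast (by omega : n ≠ 0)
    simp [hK, hn0.symm, IsLeast]
  · have hbdd : BddBelow (hitColumns h (tan ω)) := ⟨1, fun _ hk => hk.1⟩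
    have hleast : IsLeast (hitColumns h (tan ω)) (sInf (hitColumns h (tan ω))) :=
      ⟨Int.csInf_mem hK hbdd, fun _ hk => csInf_le hbdd hk⟩
    have hmono : StrictMono fun k : ℤ => (k : ℝ) / cos ω :=
      fun _ _ hkl => div_lt_div_of_pos_right (Int.cast_lt.mpr hkl) hc
    rw [(hmono.map_isLeast.mpr hleast).csInf_eq, div_mul_cancel₀ _ hc.ne', Int.cast_inj]
    exact ⟨fun hn => hn ▸ hleast, hleast.unique⟩

lemma lv_hits_scatterer_iff {h ω : ℝ} (hc : 0 < cos ω) {q a : ℤ} (hq : 1 ≤ q) :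
    (lv h ω * cos ω = q ∧ |lv h ω * sin ω - a| ≤ h) ↔
      IsLeast (hitColumns h (tan ω)) q ∧ |q * tan ω - a| ≤ h := by
  rw [← lv_mul_cos_eq_iff_isLeast hc hq, mul_sin_eq_mul_cos_mul_tan hc]
  exact and_congr_right fun hcol => by rw [hcol]

lemma mem_lowerBounds_hitColumns_iff {h t : ℝ} {q : ℤ} :
    q ∈ lowerBounds (hitColumns h t) ↔ ∀ k : ℤ, 1 ≤ k → k < q → ∀ m : ℤ, h < |k * t - m| := by
  simp only [lowerBounds, hitColumns, mem_ofPred_eq]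
  constructor
  · intro H k hk hkq m
    by_contra! hm
    exact (H ⟨hk, m, hm⟩).not_gt hkq
  · rintro H k ⟨hk, m, hm⟩
    by_contra! hkq
    exact (H k hk hkq m).not_ge hm

lemma modEq_sub_mul_mul_of_mul_modEq_one {q a b : ℤ} (hab : a * b ≡ 1 [ZMOD q]) (k m : ℤ) :
    k ≡ (k * a - m * q) * b [ZMOD q] := by
  obtain ⟨s, hs⟩ := hab.symm.dvd
  exact Int.modEq_iff_dvd.mpr ⟨k * s - m * b, by linear_combination k * hs⟩

lemma eq_of_modEq_of_mem_Ico {q k l : ℤ} (h : k ≡ l [ZMOD q]) (hk : k ∈ Ico 0 q)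
    (hl : l ∈ Ico 0 q) : k = l := by
  rwa [Int.ModEq, Int.emod_eq_of_lt hk.1 hk.2, Int.emod_eq_of_lt hl.1 hl.2] at h

lemma forall_lt_abs_sub_iff {h t : ℝ} {q a b : ℤ} (hh : 0 < h) (hqh : q * h ≤ 1)
    (hab : a * b ≡ 1 [ZMOD q]) (hb : 1 ≤ b) (hbq : b < q) (hu : |q * t - a| ≤ h) :
    (∀ k : ℤ, 1 ≤ k → k < q → ∀ m : ℤ, h < |k * t - m|) ↔
      q * h - 1 < b * (q * t - a) ∧ (q - b) * (q * t - a) < 1 - q * h := by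
  set u : ℝ := q * t - a
  have hq : (0 : ℝ) < q := by exact_mod_cast (by omega : 0 < q)
  have hb0 : (0 : ℝ) < b := by exact_mod_cast hb
  have hbq' : (b : ℝ) + 1 ≤ q := by exact_mod_cast hbq
  obtain ⟨hu₁, hu₂⟩ := abs_le.mp hu
  have scale (k m : ℤ) : h < |k * t - m| ↔ q * h < |k * u + (k * a - m * q : ℤ)| := by
    have hscale : (q : ℝ) * (k * t - m) = k * u + (k * a - m * q : ℤ) := by push_cast; ring
    rw [← hscale, abs_mul, abs_of_pos hq, mul_lt_mul_iff_right₀ hq]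
  obtain ⟨s, hs⟩ := hab.symm.dvd
  constructor
  · intro H
    have h₁ := (scale b s).mp (H b hb hbq s)
    have h₂ := (scale (q - b) (a - s)).mp (H (q - b) (by omega) (by omega) (a - s))
    rw [show b * a - s * q = 1 by linear_combination hs, Int.cast_one] at h₁
    rw [show (q - b) * a - (a - s) * q = -1 by linear_combination -hs] at h₂
    push_cast at h₂
    constructor
    · rcases lt_abs.mp h₁ with h₁ | h₁ <;> nlinarith
    · rcases lt_abs.mp h₂ with h₂ | h₂ <;> nlinarith
  · rintro ⟨hlo, hhi⟩ k hk hkq m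
    have hkj := modEq_sub_mul_mul_of_mul_modEq_one hab k m
    rw [scale]
    set j := k * a - m * q
    have hk0 : (0 : ℝ) < k := by exact_mod_cast hk
    have hkq' : (k : ℝ) + 1 ≤ q := by exact_mod_cast hkq
    rcases (by omega : j = 0 ∨ j = 1 ∨ j = -1 ∨ 2 ≤ j ∨ 2 ≤ -j) with hj | hj | hj | hj
    · rw [hj, zero_mul] at hkj
      have hk0 := eq_of_modEq_of_mem_Ico hkj ⟨by omega, hkq⟩ ⟨le_rfl, by omega⟩
      omega
    · rw [hj, one_mul] at hkj
      obtain rfl := eq_of_modEq_of_mem_Ico hkj ⟨by omega, hkq⟩ ⟨by omega, hbq⟩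
      rw [hj, Int.cast_one]
      exact lt_abs.mpr (Or.inl (by linarith))
    · have hkb : k ≡ q - b [ZMOD q] := hkj.trans (Int.modEq_iff_dvd.mpr ⟨1, by rw [hj]; ring⟩)
      obtain rfl := eq_of_modEq_of_mem_Ico hkb ⟨by omega, hkq⟩ ⟨by omega, by omega⟩
      rw [hj]
      push_cast at hhi ⊢
      exact lt_abs.mpr (Or.inr (by linarith))
    · have hj' : (2 : ℝ) ≤ |(j : ℝ)| := by rw [← Int.cast_abs]; exact_mod_cast le_abs.mpr hj
      have hku : |k * u| ≤ (q - 1) * h := by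
        rw [abs_mul, abs_of_pos hk0]
        exact mul_le_mul (by linarith) hu (abs_nonneg u) (by linarith)
      calc (q : ℝ) * h < 2 - (q - 1) * h := by nlinarith
        _ ≤ |(j : ℝ)| - |k * u| := by linarith
        _ ≤ |k * u + j| := by rw [add_comm]; exact abs_sub_abs_le_abs_add _ _

lemma isLeast_hitColumns_and_abs_le_iff {h t : ℝ} {q a b : ℤ} (hh : 0 < h) (hqh : q * h ≤ 1)
    (hab : a * b ≡ 1 [ZMOD q]) (hb : 1 ≤ b) (hbq : b < q)
    (hb_lo : 1 < (q + b) * h) (hb_hi : 1 < (2 * q - b) * h) :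
    IsLeast (hitColumns h t) q ∧ |q * t - a| ≤ h ↔
      t ∈ Ioo (a / q - (1 - q * h) / (q * b)) (a / q + (1 - q * h) / (q * (q - b))) := by
  have hq : (0 : ℝ) < q := by exact_mod_cast (by omega : 0 < q)
  have hb0 : (0 : ℝ) < b := by exact_mod_cast hb
  have hqb : (0 : ℝ) < q - b := sub_pos.mpr (by exact_mod_cast hbq)
  have hIoo : t ∈ Ioo (a / q - (1 - q * h) / (q * b)) (a / q + (1 - q * h) / (q * (q - b))) ↔
      q * h - 1 < b * (q * t - a) ∧ (q - b) * (q * t - a) < 1 - q * h := by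
    have e₁ : t - (a / q - (1 - q * h) / (q * b)) = (b * (q * t - a) - (q * h - 1)) / (q * b) := by
      field_simp; ring
    have e₂ : a / q + (1 - q * h) / (q * (q - b)) - t =
        (1 - q * h - (q - b) * (q * t - a)) / (q * (q - b)) := by
      field_simp; ring
    rw [mem_Ioo, ← sub_pos, e₁, ← sub_pos (b := t), e₂, div_pos_iff_of_pos_right (by positivity),
      div_pos_iff_of_pos_right (by positivity), sub_pos, sub_pos]
  rw [hIoo, IsLeast, mem_lowerBounds_hitColumns_iff]
  constructor
  · rintro ⟨⟨-, H⟩, hu⟩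
    exact (forall_lt_abs_sub_iff hh hqh hab hb hbq hu).mp H
  · rintro ⟨h₁, h₂⟩
    have hu : |q * t - a| ≤ h := abs_le.mpr ⟨by nlinarith, by nlinarith⟩
    exact ⟨⟨⟨by omega, a, hu⟩, (forall_lt_abs_sub_iff hh hqh hab hb hbq hu).mpr ⟨h₁, h₂⟩⟩, hu⟩

lemma setOf_tan_mem_Ioo {x y : ℝ} (hx : 0 ≤ x) (hy : y ≤ 1) :
    {ω ∈ Ico 0 (π / 4) | tan ω ∈ Ioo x y} = Ioo (arctan x) (arctan y) := by
  have hIco : Ico 0 (π / 4) ⊆ Ioo (-(π / 2)) (π / 2) :=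
    Ico_subset_Ioo (by linarith [pi_pos]) (by linarith [pi_pos])
  have hIoo : Ioo (arctan x) (arctan y) ⊆ Ico 0 (π / 4) := by
    refine Ioo_subset_Ico_self.trans (Ico_subset_Ico ?_ ?_)
    · simpa using arctan_strictMono.monotone hx
    · simpa using arctan_strictMono.monotone hy
  have htan {ω : ℝ} (hω : ω ∈ Ioo (-(π / 2)) (π / 2)) :
      tan ω ∈ Ioo x y ↔ ω ∈ Ioo (arctan x) (arctan y) := by
    rw [mem_Ioo, mem_Ioo, ← arctan_strictMono.lt_iff_lt, ← arctan_strictMono.lt_iff_lt (b := y),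
      arctan_tan hω.1 hω.2]
  ext ω
  exact ⟨fun ⟨hω, ht⟩ => (htan (hIco hω)).mp ht,
    fun hω => ⟨hIoo hω, (htan (hIco (hIoo hω))).mpr hω⟩⟩

lemma abs_inv_one_add_sq_sub_le (t c : ℝ) : |1 / (1 + t ^ 2) - 1 / (1 + c ^ 2)| ≤ |t - c| := by
  have hden : 0 < (1 + t ^ 2) * (1 + c ^ 2) := by positivity
  rw [div_sub_div _ _ (by positivity) (by positivity), abs_div, abs_of_pos hden,
    div_le_iff₀ hden, show 1 * (1 + c ^ 2) - (1 + t ^ 2) * 1 = -(t - c) * (t + c) by ring,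
    abs_mul, abs_neg]
  gcongr
  -- `|t + c| ≤ (1 + t²) / 2 + (1 + c²) / 2 ≤ (1 + t²) (1 + c²)`
  rw [abs_le]
  constructor <;> nlinarith [sq_nonneg (t + 1), sq_nonneg (c + 1), sq_nonneg (t - 1),
    sq_nonneg (c - 1), mul_nonneg (sq_nonneg t) (sq_nonneg c)]

lemma abs_arctan_sub_arctan_sub_le {c d x y : ℝ} (hxy : x ≤ y) (hx : c - d ≤ x) (hy : y ≤ c + d) :
    |arctan y - arctan x - (y - x) / (1 + c ^ 2)| ≤ d * (y - x) := by
  have hderiv (t : ℝ) : HasDerivAt (fun s => arctan s - s / (1 + c ^ 2))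
      (1 / (1 + t ^ 2) - 1 / (1 + c ^ 2)) t :=
    (hasDerivAt_arctan t).sub ((hasDerivAt_id t).div_const _)
  have hbound : ∀ t ∈ Icc x y, ‖1 / (1 + t ^ 2) - 1 / (1 + c ^ 2)‖ ≤ d := fun t ht =>
    (abs_inv_one_add_sq_sub_le t c).trans (abs_le.mpr ⟨by linarith [ht.1], by linarith [ht.2]⟩)
  have := (convex_Icc x y).norm_image_sub_le_of_norm_hasDerivWithin_le
    (fun t _ => (hderiv t).hasDerivWithinAt) hbound (left_mem_Icc.mpr hxy) (right_mem_Icc.mpr hxy)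
  rw [Real.norm_eq_abs, Real.norm_eq_abs, abs_of_nonneg (sub_nonneg.mpr hxy)] at this
  convert this using 2
  ring

lemma sub_div_mem_Icc {q Q m : ℝ} (hq : 0 < q) (hqQ : q ≤ Q) (hm : 0 < m) (hQm : Q - q ≤ m) :
    (Q - q) / (q * Q * m) ∈ Icc 0 (1 / (q * Q)) := by
  have hQ : 0 < Q := hq.trans_le hqQ
  refine ⟨div_nonneg (sub_nonneg.mpr hqQ) (by positivity), ?_⟩
  rw [div_le_div_iff₀ (by positivity) (by positivity)]
  nlinarith [mul_pos hq hQ]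

lemma omegaQA_eq_arctan_sub_arctan {Q : ℕ} {q a b : ℤ} (hqQ : q ≤ Q) (ha : 1 ≤ a)
    (haq : a ≤ q - 1) (hab : a * b ≡ 1 [ZMOD q]) (hb : 1 ≤ b) (hbq : b ≤ q - 1)
    (hb_lo : (Q : ℤ) - q + 1 ≤ b) (hb_hi : b ≤ 2 * q - (Q : ℤ) - 1) :
    omegaQA Q q a = arctan (a / q + (Q - q) / (q * Q * (q - b))) -
      arctan (a / q - (Q - q) / (q * Q * b)) := by
  have hq : (0 : ℝ) < q := by exact_mod_cast (by omega : 0 < q)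
  have hqQ' : (q : ℝ) ≤ Q := by exact_mod_cast hqQ
  have hQ : (0 : ℝ) < Q := hq.trans_le hqQ'
  have hb' : (1 : ℝ) ≤ b := by exact_mod_cast hb
  have hbq' : (b : ℝ) ≤ q - 1 := by exact_mod_cast hbq
  have hb_lo' : (Q : ℝ) - q + 1 ≤ b := by exact_mod_cast hb_lo
  have hb_hi' : (b : ℝ) ≤ 2 * q - Q - 1 := by exact_mod_cast hb_hi
  have ha' : (1 : ℝ) ≤ a := by exact_mod_cast ha
  have haq' : (a : ℝ) ≤ q - 1 := by exact_mod_cast haq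
  obtain ⟨hα₀, hα⟩ := sub_div_mem_Icc hq hqQ' (by linarith) (by linarith : (Q : ℝ) - q ≤ b)
  obtain ⟨hβ₀, hβ⟩ := sub_div_mem_Icc hq hqQ' (by linarith) (by linarith : (Q : ℝ) - q ≤ q - b)
  have hd : 1 / ((q : ℝ) * Q) ≤ 1 / q := by gcongr; nlinarith
  have hx : 0 ≤ (a : ℝ) / q - (Q - q) / (q * Q * b) := by
    have : 1 / (q : ℝ) ≤ a / q := by gcongr
    linarith
  have hy : (a : ℝ) / q + (Q - q) / (q * Q * (q - b)) ≤ 1 := by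
    have : (a : ℝ) / q ≤ 1 - 1 / q := by rw [le_sub_iff_add_le, ← add_div, div_le_one hq]; linarith
    linarith
  have hset : {ω ∈ Ico (0 : ℝ) (π / 4) | lv (1 / Q) ω * cos ω = q ∧
      |lv (1 / Q) ω * sin ω - a| ≤ 1 / Q} = {ω ∈ Ico (0 : ℝ) (π / 4) | tan ω ∈
        Ioo ((a : ℝ) / q - (Q - q) / (q * Q * b)) (a / q + (Q - q) / (q * Q * (q - b)))} := by
    ext ω
    refine and_congr_right fun hω => ?_
    have hc : 0 < cos ω :=
      cos_pos_of_mem_Ioo ⟨by linarith [pi_pos, hω.1], by linarith [pi_pos, hω.2]⟩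
    have hend (m : ℝ) : (1 - q * (1 / (Q : ℝ))) / (q * m) = (Q - q) / (q * Q * m) := by
      field_simp
    rw [lv_hits_scatterer_iff hc (by omega),
      isLeast_hitColumns_and_abs_le_iff (by positivity) ?_ hab hb (by omega) ?_ ?_, hend, hend]
    · rw [mul_one_div, div_le_one hQ]; exact hqQ'
    · rw [mul_one_div, one_lt_div hQ]; linarith
    · rw [mul_one_div, one_lt_div hQ]; linarith
  rw [omegaQA, hset, setOf_tan_mem_Ioo hx hy, Real.volume_Ioo,
    ENNReal.toReal_ofReal (sub_nonneg.mpr (arctan_strictMono.monotone (by linarith)))]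

theorem statement11 :
    ∃ C > 0, ∀ Q : ℕ, 2 ≤ Q → ∀ q a abar : ℤ, Int.gcd a q = 1 →
      2 * (Q : ℝ) / 3 < (q : ℝ) → q ≤ (Q : ℤ) → 1 ≤ a → a ≤ q - 1 →
      1 ≤ abar → abar ≤ q - 1 → Int.ModEq q (a * abar) 1 →
      (Q : ℤ) - q + 1 ≤ abar → abar ≤ 2 * q - (Q : ℤ) - 1 →
      |omegaQA Q q a -
          ((Q : ℝ) - (q : ℝ)) /
            ((Q : ℝ) * (abar : ℝ) * ((q : ℝ) - (abar : ℝ)) *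
              (1 + (a : ℝ) ^ 2 / (q : ℝ) ^ 2))|
        ≤ C * (1 / ((Q : ℝ) ^ 2 * (abar : ℝ)) +
              1 / ((Q : ℝ) ^ 2 * ((q : ℝ) - (abar : ℝ)))) := by
  refine ⟨1, one_pos, fun Q _ q a b _ _ hqQ ha haq hb hbq hab hb_lo hb_hi => ?_⟩
  have hq : (0 : ℝ) < q := by exact_mod_cast (by omega : 0 < q)
  have hqQ' : (q : ℝ) ≤ Q := by exact_mod_cast hqQ
  have hQ : (0 : ℝ) < Q := hq.trans_le hqQ'
  have hb' : (0 : ℝ) < b := by exact_mod_cast hb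
  have hqb : (0 : ℝ) < q - b := by linarith [(by exact_mod_cast hbq : (b : ℝ) ≤ q - 1)]
  have hb_lo' : (Q : ℝ) - q + 1 ≤ b := by exact_mod_cast hb_lo
  have hb_hi' : (b : ℝ) ≤ 2 * q - Q - 1 := by exact_mod_cast hb_hi
  obtain ⟨hα₀, hα⟩ := sub_div_mem_Icc hq hqQ' hb' (by linarith : (Q : ℝ) - q ≤ b)
  obtain ⟨hβ₀, hβ⟩ := sub_div_mem_Icc hq hqQ' hqb (by linarith : (Q : ℝ) - q ≤ q - b)
  set c : ℝ := a / q
  set α : ℝ := (Q - q) / (q * Q * b)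
  set β : ℝ := (Q - q) / (q * Q * (q - b))
  have hmain : ((Q : ℝ) - q) / (Q * b * (q - b) * (1 + (a : ℝ) ^ 2 / (q : ℝ) ^ 2)) =
      ((c + β) - (c - α)) / (1 + c ^ 2) := by
    simp only [c, α, β]; field_simp; ring
  rw [omegaQA_eq_arctan_sub_arctan hqQ ha haq hab hb hbq hb_lo hb_hi, hmain]
  calc _ ≤ 1 / (q * Q) * ((c + β) - (c - α)) :=
        abs_arctan_sub_arctan_sub_le (by linarith) (by linarith) (by linarith)
    _ = (Q - q) / q ^ 2 * (1 / (Q ^ 2 * b) + 1 / (Q ^ 2 * (q - b))) := by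
        simp only [α, β]; field_simp; ring
    _ ≤ 1 * (1 / (Q ^ 2 * b) + 1 / (Q ^ 2 * (q - b))) := by
        gcongr
        rw [div_le_one (by positivity)]
        nlinarith
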